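/- arXiv:1101.3678 — 3 statements merged into one kernel-verified Lean document; each statement's English description precedes it below -/
import Mathlib

section
/- Let f be a polynomial on C^n with dim Sing f ≥ 1 and let l = x_n be a linear form generic with respect to f. Then for all but finitely many ε ≠ 0 near 0, the singular locus of f_ε = f + ε·l^d satisfies: Sing f_ε is contained in (Sing f ∩ {l = 0}) ∪ Γ(l, f), contains Sing f ∩ {l = 0}, and has dimension dim Sing f − 1. -/
open MvPolynomial

noncomputable section

/-- The critical locus of a polynomial map `ℂⁿ → ℂ`. -/
def singSet {n : ℕ} (f : MvPolynomial (Fin n) ℂ) : Set (Fin n → ℂ) :=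
  {x | ∀ i, eval x (pderiv i f) = 0}

/-- The affine cone over the set `Σ^∞ ⊂ ℙ^{n-1}` of singular points of the degree-`d`
homogeneous part of `f` (tangencies at infinity). -/
def coneSigmaInf {n : ℕ} (f : MvPolynomial (Fin n) ℂ) (d : ℕ) : Set (Fin n → ℂ) :=
  {x | x ≠ 0 ∧ ∀ i, eval x (pderiv i (homogeneousComponent d f)) = 0}

/-- Dimension of an affine algebraic subset of `ℂⁿ`: the Krull dimension of its
coordinate ring. -/
def adim {n : ℕ} (S : Set (Fin n → ℂ)) : WithBot (WithTop ℕ) :=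
  ringKrullDim (MvPolynomial (Fin n) ℂ ⧸ MvPolynomial.vanishingIdeal ℂ S)

namespace STaux

open Ideal Order

lemma krullDim_le_of_forall {α : Type*} [Preorder α] {c : WithBot ℕ∞}
    (h : ∀ p : LTSeries α, (p.length : WithBot ℕ∞) ≤ c) : Order.krullDim α ≤ c :=
  iSup_le h

lemma one_le_krullDim_of_lt {α : Type*} [Preorder α] {a b : α} (h : a < b) :
    1 ≤ Order.krullDim α := by
  have := LTSeries.length_le_krullDim
    (⟨1, ![a, b], fun i => by fin_cases i <;> simpa using h⟩ : LTSeries α)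
  simpa using this

lemma two_le_krullDim_of_lt {α : Type*} [Preorder α] {a b c : α} (h1 : a < b) (h2 : b < c) :
    2 ≤ Order.krullDim α := by
  have := LTSeries.length_le_krullDim
    (⟨2, ![a, b, c], fun i => by fin_cases i <;> simp [h1, h2]⟩ : LTSeries α)
  simpa using this

variable {R : Type*} [CommRing R]

/-- Chains of primes of `R ⧸ L` correspond to chains of primes of `R` over `L`. -/
def specQuotIso (L : Ideal R) :
    PrimeSpectrum (R ⧸ L) ≃o {p : PrimeSpectrum R // L ≤ p.asIdeal} where
  toFun q := ⟨⟨q.asIdeal.comap (Ideal.Quotient.mk L), Ideal.comap_isPrime _ _⟩,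
    fun x hx => by
      show Ideal.Quotient.mk L x ∈ q.asIdeal
      rw [Ideal.Quotient.eq_zero_iff_mem.mpr hx]
      exact zero_mem _⟩
  invFun p := ⟨p.1.asIdeal.map (Ideal.Quotient.mk L),
    Ideal.map_isPrime_of_surjective Ideal.Quotient.mk_surjective
      (by rw [Ideal.mk_ker]; exact p.2)⟩
  left_inv q := PrimeSpectrum.ext (by
    show Ideal.map _ (Ideal.comap _ _) = _
    exact Ideal.map_comap_of_surjective _ Ideal.Quotient.mk_surjective _)
  right_inv p := Subtype.ext (PrimeSpectrum.ext (by
    show Ideal.comap _ (Ideal.map _ _) = _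
    rw [Ideal.comap_map_of_surjective _ Ideal.Quotient.mk_surjective,
      ← RingHom.ker_eq_comap_bot, Ideal.mk_ker, sup_eq_left.mpr p.2]))
  map_rel_iff' {a b} := by
    show Ideal.comap _ _ ≤ Ideal.comap _ _ ↔ _
    exact Ideal.comap_le_comap_iff_of_surjective _ Ideal.Quotient.mk_surjective _ _

lemma ringKrullDim_quot (L : Ideal R) :
    ringKrullDim (R ⧸ L) = Order.krullDim {p : PrimeSpectrum R // L ≤ p.asIdeal} :=
  Order.krullDim_eq_of_orderIso (specQuotIso L)

lemma krullDim_over_mono {I J : Ideal R} (h : I ≤ J) :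
    Order.krullDim {p : PrimeSpectrum R // J ≤ p.asIdeal}
      ≤ Order.krullDim {p : PrimeSpectrum R // I ≤ p.asIdeal} :=
  Order.krullDim_le_of_strictMono (fun x => ⟨x.1, h.trans x.2⟩)
    (fun a b hab => by
      rw [Subtype.mk_lt_mk]
      exact Subtype.coe_lt_coe.mpr hab)

lemma krullDim_over_radical (I : Ideal R) :
    Order.krullDim {p : PrimeSpectrum R // I.radical ≤ p.asIdeal}
      = Order.krullDim {p : PrimeSpectrum R // I ≤ p.asIdeal} := by
  refine le_antisymm (krullDim_over_mono Ideal.le_radical) ?_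
  refine Order.krullDim_le_of_strictMono
    (fun x => ⟨x.1, x.1.isPrime.radical_le_iff.mpr x.2⟩) ?_
  intro a b hab
  rw [Subtype.mk_lt_mk]
  exact Subtype.coe_lt_coe.mpr hab

lemma adim_eq {n : ℕ} (S : Set (Fin n → ℂ)) :
    adim S = Order.krullDim
      {p : PrimeSpectrum (MvPolynomial (Fin n) ℂ) // MvPolynomial.vanishingIdeal ℂ S ≤ p.asIdeal} :=
  ringKrullDim_quot _

lemma adim_mono {n : ℕ} {S T : Set (Fin n → ℂ)} (h : S ⊆ T) : adim S ≤ adim T := by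
  rw [adim_eq, adim_eq]
  exact krullDim_over_mono (MvPolynomial.vanishingIdeal_anti_mono h)

lemma adim_zeroLocus {n : ℕ} (I : Ideal (MvPolynomial (Fin n) ℂ)) :
    adim (MvPolynomial.zeroLocus ℂ I)
      = Order.krullDim {p : PrimeSpectrum (MvPolynomial (Fin n) ℂ) // I ≤ p.asIdeal} := by
  rw [adim_eq, MvPolynomial.vanishingIdeal_zeroLocus_eq_radical, krullDim_over_radical]

lemma adim_empty {n : ℕ} : adim (∅ : Set (Fin n → ℂ)) = ⊥ := by
  rw [adim_eq, MvPolynomial.vanishingIdeal_empty]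
  haveI : IsEmpty {p : PrimeSpectrum (MvPolynomial (Fin n) ℂ) // ⊤ ≤ p.asIdeal} :=
    ⟨fun x => x.1.isPrime.ne_top (top_le_iff.mp x.2)⟩
  exact Order.krullDim_eq_bot

lemma vanishingIdeal_union {n : ℕ} (A B : Set (Fin n → ℂ)) :
    MvPolynomial.vanishingIdeal ℂ (A ∪ B)
      = MvPolynomial.vanishingIdeal ℂ A ⊓ MvPolynomial.vanishingIdeal ℂ B := by
  ext p
  simp only [MvPolynomial.mem_vanishingIdeal_iff, Ideal.mem_inf, Set.mem_union, or_imp,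
    forall_and]

lemma adim_union_le {n : ℕ} (A B : Set (Fin n → ℂ)) :
    adim (A ∪ B) ≤ max (adim A) (adim B) := by
  rw [adim_eq (A ∪ B), adim_eq A, adim_eq B, vanishingIdeal_union]
  apply krullDim_le_of_forall
  intro p
  rcases (p.head).1.isPrime.inf_le.mp (p.head).2 with hI | hI
  · refine le_trans ?_ (le_max_left _ _)
    exact LTSeries.length_le_krullDim
      (⟨p.length, fun i => ⟨(p i).1, hI.trans (p.monotone (Fin.zero_le i))⟩,
        fun i => by
          simp only [Set.mem_setOf_eq]
          rw [Subtype.mk_lt_mk]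
          exact Subtype.coe_lt_coe.mpr (p.step i)⟩ :
        LTSeries {q : PrimeSpectrum (MvPolynomial (Fin n) ℂ) //
          MvPolynomial.vanishingIdeal ℂ A ≤ q.asIdeal})
  · refine le_trans ?_ (le_max_right _ _)
    exact LTSeries.length_le_krullDim
      (⟨p.length, fun i => ⟨(p i).1, hI.trans (p.monotone (Fin.zero_le i))⟩,
        fun i => by
          simp only [Set.mem_setOf_eq]
          rw [Subtype.mk_lt_mk]
          exact Subtype.coe_lt_coe.mpr (p.step i)⟩ :
        LTSeries {q : PrimeSpectrum (MvPolynomial (Fin n) ℂ) //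
          MvPolynomial.vanishingIdeal ℂ B ≤ q.asIdeal})

end STaux

/-- **Reducing the dimension of the affine singular locus by one** (Lemma 3.2 of
Siersma–Tibăr, "Betti bounds of polynomials").
Let `f` be a polynomial of degree `d` on `ℂⁿ` (`n = m+1`) with `dim Sing f ≥ 1`, and
let `l = xₙ` be generic with respect to `f`: the polar locus `Γ(l,f)` is empty or a
curve, and `{l = 0}` slices `Sing f` in dimension `dim Sing f − 1`. Then for all but
finitely many `ε ≠ 0` near `0`, the singular locus of `f_ε = f + ε·lᵈ` satisfies
`Sing f ∩ {l=0} ⊆ Sing f_ε ⊆ (Sing f ∩ {l=0}) ∪ Γ(l,f)` and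
`dim Sing f_ε = dim Sing f − 1`. -/
theorem deformation_lowers_singular_dimension (m d : ℕ) (hd : 2 ≤ d)
    (f : MvPolynomial (Fin (m + 1)) ℂ) (hdeg : f.totalDegree = d)
    (hdim : 1 ≤ adim (singSet f))
    (Γ : Set (Fin (m + 1) → ℂ))
    (hΓdef : Γ = MvPolynomial.zeroLocus ℂ (MvPolynomial.vanishingIdeal ℂ
      ({x : Fin (m + 1) → ℂ | ∀ i : Fin (m + 1), i ≠ Fin.last m →
          eval x (pderiv i f) = 0} \ singSet f)))
    (hΓ : Γ = ∅ ∨ adim Γ = 1)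
    (hslice : adim (singSet f ∩ {x | x (Fin.last m) = 0}) + 1 = adim (singSet f)) :
    ∃ δ > (0 : ℝ), ∃ T : Set ℂ, T.Finite ∧
      ∀ ε : ℂ, ε ≠ 0 → ‖ε‖ < δ → ε ∉ T →
        singSet (f + C ε * (X (Fin.last m)) ^ d)
            ⊆ (singSet f ∩ {x | x (Fin.last m) = 0}) ∪ Γ ∧
        (singSet f ∩ {x | x (Fin.last m) = 0})
            ⊆ singSet (f + C ε * (X (Fin.last m)) ^ d) ∧
        adim (singSet (f + C ε * (X (Fin.last m)) ^ d)) + 1 = adim (singSet f) := by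
  classical
  have hd0 : (d : ℂ) ≠ 0 := Nat.cast_ne_zero.mpr (by omega)
  have hd1 : d - 1 ≠ 0 := by omega
  set S₀ : Set (Fin (m + 1) → ℂ) :=
    {x : Fin (m + 1) → ℂ | ∀ i : Fin (m + 1), i ≠ Fin.last m →
      eval x (pderiv i f) = 0} \ singSet f with hS₀
  set J : Ideal (MvPolynomial (Fin (m + 1)) ℂ) := MvPolynomial.vanishingIdeal ℂ S₀ with hJdef
  set q : MvPolynomial (Fin (m + 1)) ℂ := X (Fin.last m) ^ (d - 1) with hqdef
  set g : ℂ → MvPolynomial (Fin (m + 1)) ℂ :=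
    fun ε => pderiv (Fin.last m) f + C ε * ((d : MvPolynomial (Fin (m + 1)) ℂ) * q) with hgdef
  -- derivatives of the deformation
  have hder_ne : ∀ (ε : ℂ) (i : Fin (m + 1)), i ≠ Fin.last m →
      pderiv i (f + C ε * X (Fin.last m) ^ d) = pderiv i f := by
    intro ε i hi
    rw [map_add, pderiv_C_mul, pderiv_pow, pderiv_X_of_ne (Ne.symm hi)]
    ring
  have hder_n : ∀ ε : ℂ,
      pderiv (Fin.last m) (f + C ε * X (Fin.last m) ^ d) = g ε := by
    intro ε
    simp only [hgdef, hqdef]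
    rw [map_add, pderiv_C_mul, pderiv_pow, pderiv_X_self]
    ring
  have hevalg : ∀ (ε : ℂ) (x : Fin (m + 1) → ℂ),
      eval x (g ε) = eval x (pderiv (Fin.last m) f)
        + ε * ((d : ℂ) * (x (Fin.last m)) ^ (d - 1)) := by
    intro ε x
    simp only [hgdef, hqdef]
    simp [map_add, map_mul, map_pow]
  have hsing_iff : ∀ (ε : ℂ) (x : Fin (m + 1) → ℂ),
      x ∈ singSet (f + C ε * X (Fin.last m) ^ d) ↔
        ((∀ i, i ≠ Fin.last m → eval x (pderiv i f) = 0) ∧ eval x (g ε) = 0) := by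
    intro ε x
    constructor
    · intro hx
      refine ⟨fun i hi => ?_, ?_⟩
      · have h := hx i; rwa [hder_ne ε i hi] at h
      · have h := hx (Fin.last m); rwa [hder_n ε] at h
    · rintro ⟨h1, h2⟩ i
      by_cases hi : i = Fin.last m
      · subst hi; rw [hder_n ε]; exact h2
      · rw [hder_ne ε i hi]; exact h1 i hi
  -- lower inclusion (any ε)
  have hlow : ∀ ε : ℂ, (singSet f ∩ {x | x (Fin.last m) = 0})
      ⊆ singSet (f + C ε * X (Fin.last m) ^ d) := by
    intro ε x hx
    rcases hx with ⟨hxs, hx0⟩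
    rw [hsing_iff]
    refine ⟨fun i _ => hxs i, ?_⟩
    rw [hevalg, hxs (Fin.last m), Set.mem_setOf_eq.mp hx0, zero_pow hd1]
    ring
  -- upper inclusion (ε ≠ 0)
  have hup : ∀ ε : ℂ, ε ≠ 0 → ∀ x, x ∈ singSet (f + C ε * X (Fin.last m) ^ d) →
      x ∈ (singSet f ∩ {x | x (Fin.last m) = 0}) ∪ (Γ ∩ {x | eval x (g ε) = 0}) := by
    intro ε hε x hx
    rw [hsing_iff] at hx
    obtain ⟨h1, h2⟩ := hx
    by_cases hxs : x ∈ singSet f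
    · left
      refine ⟨hxs, ?_⟩
      have h3 := hevalg ε x
      rw [h2, hxs (Fin.last m), zero_add] at h3
      have h4 : (x (Fin.last m)) ^ (d - 1) = 0 := by
        rcases mul_eq_zero.mp h3.symm with h | h
        · exact absurd h hε
        · rcases mul_eq_zero.mp h with h' | h'
          · exact absurd h' hd0
          · exact h'
      exact pow_eq_zero_iff hd1 |>.mp h4
    · right
      refine ⟨?_, h2⟩
      rw [hΓdef]
      exact MvPolynomial.zeroLocus_vanishingIdeal_le S₀ ⟨h1, hxs⟩
  -- the slice dimension is not ⊥
  have ha_ne : adim (singSet f ∩ {x | x (Fin.last m) = 0}) ≠ ⊥ := by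
    intro h
    rw [h, WithBot.bot_add] at hslice
    rw [← hslice] at hdim
    simp at hdim
  refine ⟨1, one_pos, ⋃ 𝔭 ∈ J.minimalPrimes, {ε : ℂ | g ε ∈ 𝔭 ∧ q ∉ 𝔭}, ?_, ?_⟩
  · -- finiteness of the exceptional set
    refine Set.Finite.biUnion ?_ ?_
    · rw [Ideal.minimalPrimes_eq_comap]
      exact (minimalPrimes.finite_of_isNoetherianRing _).image _
    · intro 𝔭 h𝔭
      refine Set.Subsingleton.finite ?_
      intro ε1 h1 ε2 h2
      by_contra hne
      have hprime : 𝔭.IsPrime := h𝔭.1.1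
      have hsub : g ε1 - g ε2
          = C (ε1 - ε2) * ((d : MvPolynomial (Fin (m + 1)) ℂ) * q) := by
        simp only [hgdef]
        rw [C_sub]
        ring
      have hmem : C (ε1 - ε2) * ((d : MvPolynomial (Fin (m + 1)) ℂ) * q) ∈ 𝔭 := by
        rw [← hsub]; exact sub_mem h1.1 h2.1
      rcases hprime.mem_or_mem hmem with hc | hdq
      · exact hprime.ne_top (Ideal.eq_top_of_isUnit_mem _ hc
          (((sub_ne_zero.mpr hne).isUnit).map (C : ℂ →+* MvPolynomial (Fin (m + 1)) ℂ)))
      · rcases hprime.mem_or_mem hdq with hdm | hqm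
        · rw [← map_natCast (C : ℂ →+* MvPolynomial (Fin (m + 1)) ℂ) d] at hdm
          exact hprime.ne_top (Ideal.eq_top_of_isUnit_mem _ hdm
            ((hd0.isUnit).map (C : ℂ →+* MvPolynomial (Fin (m + 1)) ℂ)))
        · exact h1.2 hqm
  · intro ε hε hδ hεT
    have hWeq : Γ ∩ {x | eval x (g ε) = 0}
        = MvPolynomial.zeroLocus ℂ (J ⊔ Ideal.span {g ε}) := by
      rw [hΓdef]
      ext x
      simp only [Set.mem_inter_iff, MvPolynomial.mem_zeroLocus_iff, Set.mem_setOf_eq,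
        MvPolynomial.coe_aeval_eq_eval]
      constructor
      · rintro ⟨hxΓ, hxg⟩ p hp
        obtain ⟨y, hy, z, hz, rfl⟩ := Submodule.mem_sup.mp hp
        obtain ⟨c, rfl⟩ := Ideal.mem_span_singleton.mp hz
        rw [map_add, hxΓ y hy, map_mul, (show aeval x (g ε) = 0 from hxg), zero_mul, add_zero]
      · intro h
        exact ⟨fun p hp => h p (Ideal.mem_sup_left hp),
          h (g ε) (Ideal.mem_sup_right (Ideal.subset_span rfl))⟩
    -- key dimension bound on the polar part
    have hkey : adim (Γ ∩ {x | eval x (g ε) = 0})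
        ≤ adim (singSet f ∩ {x | x (Fin.last m) = 0}) := by
      rcases hΓ with hΓe | hΓ1
      · rw [hΓe, Set.empty_inter, STaux.adim_empty]; exact bot_le
      by_cases ha1 : 1 ≤ adim (singSet f ∩ {x | x (Fin.last m) = 0})
      · exact le_trans (le_trans (STaux.adim_mono Set.inter_subset_left) (le_of_eq hΓ1)) ha1
      · obtain ⟨a', ha'⟩ := WithBot.ne_bot_iff_exists.mp ha_ne
        have ha0 : adim (singSet f ∩ {x | x (Fin.last m) = 0}) = 0 := by
          rw [← ha'] at ha1 ⊢
          rw [← WithBot.coe_one] at ha1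
          have := ENat.lt_one_iff_eq_zero.mp (WithBot.coe_lt_coe.mp (not_le.mp ha1))
          rw [this]
          rfl
        rw [ha0, hWeq, STaux.adim_zeroLocus]
        apply STaux.krullDim_le_of_forall
        intro p
        by_contra hlen
        have hpos : 0 < p.length := by
          rcases Nat.eq_zero_or_pos p.length with h0 | h0
          · exact absurd (by rw [h0]; exact_mod_cast le_refl _) hlen
          · exact h0
        have hstep := p.step ⟨0, hpos⟩
        set P0 := p.toFun (Fin.castSucc ⟨0, hpos⟩) with hP0
        set P1 := p.toFun (Fin.succ ⟨0, hpos⟩) with hP1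
        have hJP0 : J ≤ P0.1.asIdeal := le_trans le_sup_left P0.2
        haveI : P0.1.asIdeal.IsPrime := P0.1.isPrime
        obtain ⟨𝔭, h𝔭min, h𝔭le⟩ := Ideal.exists_minimalPrimes_le hJP0
        have h𝔭prime : 𝔭.IsPrime := h𝔭min.1.1
        have hgP0 : g ε ∈ P0.1.asIdeal :=
          P0.2 (Ideal.mem_sup_right (Ideal.subset_span rfl))
        have hlt01 : P0.1 < P1.1 := hstep
        by_cases hgp : g ε ∈ 𝔭
        · by_cases hqp : q ∈ 𝔭
          · -- the whole component lies in Sing f ∩ {xₙ = 0}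
            have hXn : X (Fin.last m) ∈ 𝔭 := by
              rw [hqdef] at hqp
              exact (h𝔭prime.pow_mem_iff_mem (d - 1) (Nat.pos_of_ne_zero hd1)).mp hqp
            have hpn : pderiv (Fin.last m) f ∈ 𝔭 := by
              have hq2 : C ε * ((d : MvPolynomial (Fin (m + 1)) ℂ) * q) ∈ 𝔭 :=
                Ideal.mul_mem_left _ _ (Ideal.mul_mem_left _ _ hqp)
              have h7 := Ideal.sub_mem _ hgp hq2
              simpa [hgdef] using h7
            have hzl : MvPolynomial.zeroLocus ℂ 𝔭
                ⊆ singSet f ∩ {x | x (Fin.last m) = 0} := by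
              intro x hx
              refine ⟨fun i => ?_, ?_⟩
              · by_cases hi : i = Fin.last m
                · subst hi; exact hx _ hpn
                · exact hx _ (h𝔭min.1.2 (fun y hy => hy.1 i hi))
              · simpa using hx _ hXn
            have hd0' : Order.krullDim
                {p' : PrimeSpectrum (MvPolynomial (Fin (m + 1)) ℂ) // 𝔭 ≤ p'.asIdeal}
                  ≤ 0 := by
              have h5 := STaux.adim_mono hzl
              rw [ha0, STaux.adim_zeroLocus] at h5
              exact h5
            have h6 := STaux.one_le_krullDim_of_lt
              (a := (⟨P0.1, h𝔭le⟩ :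
                {p' : PrimeSpectrum (MvPolynomial (Fin (m + 1)) ℂ) // 𝔭 ≤ p'.asIdeal}))
              (b := ⟨P1.1, le_trans h𝔭le (le_of_lt hlt01)⟩)
              (Subtype.mk_lt_mk.mpr hlt01)
            exact absurd (le_trans h6 hd0') (by simp)
          · exact hεT (Set.mem_biUnion h𝔭min ⟨hgp, hqp⟩)
        · have hne𝔭 : 𝔭 ≠ P0.1.asIdeal := fun e => hgp (e ▸ hgP0)
          have hlt0' : 𝔭 < P0.1.asIdeal := lt_of_le_of_ne h𝔭le hne𝔭
          have hlt0 : (⟨𝔭, h𝔭prime⟩ : PrimeSpectrum (MvPolynomial (Fin (m + 1)) ℂ)) < P0.1 :=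
            (PrimeSpectrum.asIdeal_lt_asIdeal _ _).mp hlt0'
          have h2le := STaux.two_le_krullDim_of_lt
            (a := (⟨⟨𝔭, h𝔭prime⟩, h𝔭min.1.2⟩ :
              {p' : PrimeSpectrum (MvPolynomial (Fin (m + 1)) ℂ) // J ≤ p'.asIdeal}))
            (b := ⟨P0.1, hJP0⟩)
            (c := ⟨P1.1, le_trans hJP0 (le_of_lt hlt01)⟩)
            (Subtype.mk_lt_mk.mpr hlt0)
            (Subtype.mk_lt_mk.mpr hlt01)
          rw [hΓdef, STaux.adim_zeroLocus] at hΓ1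
          rw [hΓ1] at h2le
          exact absurd (h2le : (2 : WithBot ℕ∞) ≤ 1) (by simp : ¬ (2 : WithBot ℕ∞) ≤ 1)
    have hadim : adim (singSet (f + C ε * X (Fin.last m) ^ d))
        = adim (singSet f ∩ {x | x (Fin.last m) = 0}) := by
      refine le_antisymm ?_ (STaux.adim_mono (hlow ε))
      refine le_trans (STaux.adim_mono (fun x hx => hup ε hε x hx)) ?_
      exact le_trans (STaux.adim_union_le _ _) (max_le le_rfl hkey)
    refine ⟨?_, hlow ε, ?_⟩
    · intro x hx
      rcases hup ε hε x hx with h | h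
      · exact Or.inl h
      · exact Or.inr h.1
    · rw [hadim]; exact hslice

end
end

section
/- Let f be a polynomial on C^n with dim Sing f ≥ 1 and l a generic linear form. Then for all ε ≠ 0 in a small punctured disk, the deformation f_ε = f + ε·l has at most isolated singularities (dim Sing f_ε ≤ 0) and the same degree-d part as f (hence the same singular set at infinity Σ^∞). -/
open MvPolynomial

noncomputable section

namespace LinDefAux

/-- The set of exponents of total degree at most `N`. -/
def S (m N : ℕ) : Set (Fin m →₀ ℕ) := {s | (s.sum fun _ e => e) ≤ N}

lemma le_sum_self {m : ℕ} (s : Fin m →₀ ℕ) (i : Fin m) : s i ≤ s.sum fun _ e => e := by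
  by_cases hi : i ∈ s.support
  · exact Finset.single_le_sum (f := fun j => s j) (fun _ _ => Nat.zero_le _) hi
  · simp [Finsupp.notMem_support_iff.mp hi]

/-- Injection of `S m N` into bounded functions. -/
def toFun (m N : ℕ) (s : S m N) : Fin m → Fin (N + 1) :=
  fun i => ⟨s.1 i, Nat.lt_succ_of_le ((le_sum_self s.1 i).trans s.2)⟩

lemma toFun_injective (m N : ℕ) : Function.Injective (toFun m N) := by
  intro s t h
  ext i
  have := congrFun h i
  simpa [toFun, Fin.ext_iff] using this

instance finite_S (m N : ℕ) : Finite (S m N) :=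
  Finite.of_injective _ (toFun_injective m N)

lemma card_S_le (m N : ℕ) : Nat.card (S m N) ≤ (N + 1) ^ m := by
  have := Nat.card_le_card_of_injective _ (toFun_injective m N)
  simpa [Nat.card_eq_fintype_card, Fintype.card_fun] using this

/-- Injection of bounded functions into `S m (m * K)`. -/
def ofFun (m K : ℕ) (f : Fin m → Fin (K + 1)) : S m (m * K) := by
  refine ⟨Finsupp.equivFunOnFinite.symm (fun i => (f i : ℕ)), ?_⟩
  have : ((Finsupp.equivFunOnFinite.symm (fun i => ((f i : ℕ)))).sum fun _ e => e)
      = ∑ i : Fin m, (f i : ℕ) := by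
    rw [Finsupp.sum_fintype _ _ (fun _ => rfl)]
    simp
  show ((Finsupp.equivFunOnFinite.symm (fun i => ((f i : ℕ)))).sum fun _ e => e) ≤ m * K
  rw [this]
  calc ∑ i : Fin m, (f i : ℕ) ≤ ∑ _i : Fin m, K :=
        Finset.sum_le_sum fun i _ => Nat.lt_succ_iff.mp (f i).2
    _ = m * K := by simp [Finset.sum_const, Nat.smul_one_eq_cast]

lemma ofFun_injective (m K : ℕ) : Function.Injective (ofFun m K) := by
  intro f g h
  have h1 : Finsupp.equivFunOnFinite.symm (fun i => ((f i : ℕ)))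
      = Finsupp.equivFunOnFinite.symm (fun i => ((g i : ℕ))) := Subtype.ext_iff.mp h
  have h2 := Finsupp.equivFunOnFinite.symm.injective h1
  funext i
  exact Fin.ext (congrFun h2 i)

lemma le_card_S (m K : ℕ) : (K + 1) ^ m ≤ Nat.card (S m (m * K)) := by
  have := Nat.card_le_card_of_injective _ (ofFun_injective m K)
  simpa [Nat.card_eq_fintype_card, Fintype.card_fun] using this

lemma finrank_restrict (m N : ℕ) :
    Module.finrank ℂ (restrictTotalDegree (Fin m) ℂ N) = Nat.card (S m N) := by
  have b : Module.Basis (S m N) ℂ (restrictTotalDegree (Fin m) ℂ N) :=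
    MvPolynomial.basisRestrictSupport ℂ _
  classical
  have : Fintype (S m N) := Fintype.ofFinite _
  rw [Module.finrank_eq_card_basis b, Nat.card_eq_fintype_card]

lemma totalDegree_aeval_le {m n : ℕ} (h : Fin m → MvPolynomial (Fin n) ℂ) (D : ℕ)
    (hD : ∀ i, (h i).totalDegree ≤ D) (p : MvPolynomial (Fin m) ℂ) :
    (aeval h p).totalDegree ≤ p.totalDegree * D := by
  rw [aeval_def, eval₂_eq]
  refine (totalDegree_finset_sum _ _).trans ?_
  refine Finset.sup_le fun s hs => ?_
  refine (totalDegree_mul _ _).trans ?_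
  have h1 : (algebraMap ℂ (MvPolynomial (Fin n) ℂ) (coeff s p)).totalDegree = 0 := by
    simpa using (totalDegree_C (R := ℂ) (σ := Fin n) (coeff s p))
  rw [h1, zero_add]
  refine (totalDegree_finset_prod _ _).trans ?_
  calc ∑ i ∈ s.support, (h i ^ s i).totalDegree
      ≤ ∑ i ∈ s.support, s i * D := by
        refine Finset.sum_le_sum fun i _ => ?_
        exact (totalDegree_pow (h i) (s i)).trans (Nat.mul_le_mul_left _ (hD i))
    _ = (∑ i ∈ s.support, s i) * D := by rw [Finset.sum_mul]
    _ ≤ p.totalDegree * D := Nat.mul_le_mul_right _ (le_totalDegree hs)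

lemma exists_annihilator {n : ℕ} (h : Fin (n + 1) → MvPolynomial (Fin n) ℂ) :
    ∃ R : MvPolynomial (Fin (n + 1)) ℂ, R ≠ 0 ∧ aeval h R = 0 := by
  classical
  obtain ⟨D, hD1, hD⟩ : ∃ D : ℕ, 1 ≤ D ∧ ∀ i, (h i).totalDegree ≤ D :=
    ⟨1 + Finset.univ.sup (fun j => (h j).totalDegree), Nat.le_add_right 1 _,
     fun i => le_trans (Finset.le_sup (f := fun j => (h j).totalDegree) (Finset.mem_univ i))
       (Nat.le_add_left _ 1)⟩
  set c : ℕ := (n + 1) * D with hc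
  have hc1 : 1 ≤ c := Nat.one_le_iff_ne_zero.mpr (by positivity)
  set T : ℕ := c ^ n with hT
  set N : ℕ := (n + 1) * T with hN
  let φ := (aeval h : MvPolynomial (Fin (n + 1)) ℂ →ₐ[ℂ] MvPolynomial (Fin n) ℂ).toLinearMap
  have himg : ∀ p ∈ restrictTotalDegree (Fin (n + 1)) ℂ N,
      aeval h p ∈ restrictTotalDegree (Fin n) ℂ (N * D) := by
    intro p hp
    rw [mem_restrictTotalDegree] at hp ⊢
    exact le_trans (totalDegree_aeval_le h D hD p) (Nat.mul_le_mul_right _ hp)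
  let ψ : restrictTotalDegree (Fin (n + 1)) ℂ N →ₗ[ℂ] restrictTotalDegree (Fin n) ℂ (N * D) :=
    LinearMap.codRestrict _ (φ.comp (Submodule.subtype _)) (fun p => himg p.1 p.2)
  have hninj : ¬ Function.Injective ψ := by
    intro hinj
    have hle := LinearMap.finrank_le_finrank_of_injective hinj
    rw [finrank_restrict, finrank_restrict] at hle
    have h1 : (T + 1) ^ (n + 1) ≤ Nat.card (S (n + 1) ((n + 1) * T)) := le_card_S (n + 1) T
    have h2 : Nat.card (S n (N * D)) ≤ (N * D + 1) ^ n := card_S_le n (N * D)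
    have key : (N * D + 1) ^ n < (T + 1) ^ (n + 1) := by
      have e1 : N * D + 1 ≤ c * (T + 1) := by
        have : N * D = c * T := by rw [hN, hc]; ring
        rw [this, Nat.mul_add, Nat.mul_one]
        exact Nat.add_le_add_left hc1 _
      calc (N * D + 1) ^ n ≤ (c * (T + 1)) ^ n := Nat.pow_le_pow_left e1 n
        _ = c ^ n * (T + 1) ^ n := mul_pow _ _ _
        _ = T * (T + 1) ^ n := by rw [hT]
        _ < (T + 1) * (T + 1) ^ n :=
            (Nat.mul_lt_mul_right (pow_pos (Nat.succ_pos T) n)).mpr (Nat.lt_succ_self T)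
        _ = (T + 1) ^ (n + 1) := (pow_succ' (T + 1) n).symm
    rw [← hN] at h1
    exact absurd (h1.trans (hle.trans h2)) (not_le.mpr key)
  rw [Function.not_injective_iff] at hninj
  obtain ⟨p, q, hpq, hne⟩ := hninj
  have hval : (aeval h) p.1 = (aeval h) q.1 := congrArg Subtype.val hpq
  refine ⟨p.1 - q.1, ?_, ?_⟩
  · exact sub_ne_zero.mpr fun e => hne (Subtype.ext e)
  · rw [map_sub]
    exact sub_eq_zero.mpr hval

/-- Evaluation commutes with substitution. -/
lemma eval_aeval' {m k : ℕ} (x : Fin m → ℂ) (h : Fin k → MvPolynomial (Fin m) ℂ)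
    (p : MvPolynomial (Fin k) ℂ) :
    eval x (aeval h p) = eval (fun i => eval x (h i)) p := by
  have e : ∀ (q : MvPolynomial (Fin m) ℂ), (aeval x : MvPolynomial (Fin m) ℂ →ₐ[ℂ] ℂ) q
      = eval x q := fun q => by rw [← coe_aeval_eq_eval]; rfl
  have e2 : ∀ (y : Fin k → ℂ) (q : MvPolynomial (Fin k) ℂ),
      (aeval y : MvPolynomial (Fin k) ℂ →ₐ[ℂ] ℂ) q = eval y q := fun y q => by
    rw [← coe_aeval_eq_eval]; rfl
  rw [← e, comp_aeval_apply, ← e2]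
  have h' : (fun i => (aeval x : MvPolynomial (Fin m) ℂ →ₐ[ℂ] ℂ) (h i))
      = fun i => eval x (h i) := funext fun i => e (h i)
  rw [h']


/-- Generic fibers of a polynomial map `ℂⁿ → ℂⁿ` are finite. -/
lemma generic_fiber_finite {n : ℕ} (g : Fin n → MvPolynomial (Fin n) ℂ) :
    ∃ Q : MvPolynomial (Fin n) ℂ, Q ≠ 0 ∧
      ∀ y : Fin n → ℂ, eval y Q ≠ 0 → {x : Fin n → ℂ | ∀ i, eval x (g i) = y i}.Finite := by
  classical
  have H : ∀ j : Fin n, ∃ R : MvPolynomial (Fin (n + 1)) ℂ,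
      R ≠ 0 ∧ aeval (Fin.cons (X j) g) R = 0 :=
    fun j => exists_annihilator (Fin.cons (X j) g)
  choose R hR0 hRz using H
  set r : Fin n → Polynomial (MvPolynomial (Fin n) ℂ) :=
    fun j => MvPolynomial.finSuccEquiv ℂ n (R j) with hr
  have hr0 : ∀ j, r j ≠ 0 := by
    intro j hj
    apply hR0 j
    have := (MvPolynomial.finSuccEquiv ℂ n).injective (a₁ := R j) (a₂ := 0)
    exact this (by rw [map_zero]; exact hj)
  refine ⟨∏ j, (r j).leadingCoeff, ?_, ?_⟩
  · rw [Finset.prod_ne_zero_iff]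
    exact fun j _ => Polynomial.leadingCoeff_ne_zero.mpr (hr0 j)
  · intro y hy
    rw [map_prod, Finset.prod_ne_zero_iff] at hy
    refine Set.Finite.subset
      (Set.Finite.pi (fun j => ((r j).map (eval y)).roots.toFinset.finite_toSet)) ?_
    intro x hx
    rw [Set.mem_pi]
    intro j _
    have hpj : (r j).map (eval y) ≠ 0 := by
      intro hz
      apply hy j (Finset.mem_univ j)
      have h3 : eval y ((r j).coeff ((r j).natDegree)) = 0 := by
        have := congrArg (fun p : Polynomial ℂ => p.coeff ((r j).natDegree)) hz
        simpa [Polynomial.coeff_map] using this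
      rw [Polynomial.leadingCoeff]
      exact h3
    have h0 : eval x (aeval (Fin.cons (X j) g) (R j)) = 0 := by rw [hRz j]; simp
    rw [eval_aeval'] at h0
    have hgy : (fun k => eval x (g k)) = y := funext hx
    have hcons : (fun i => eval x ((Fin.cons (X j) g : Fin (n + 1) → MvPolynomial (Fin n) ℂ) i)) =
        (Fin.cons (x j) y : Fin (n + 1) → ℂ) := by
      have hc := Fin.comp_cons (eval x : MvPolynomial (Fin n) ℂ → ℂ) (X j) g
      calc (fun i => eval x ((Fin.cons (X j) g : Fin (n + 1) → MvPolynomial (Fin n) ℂ) i))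
          = (eval x : MvPolynomial (Fin n) ℂ → ℂ) ∘ (Fin.cons (X j) g) := rfl
        _ = Fin.cons (eval x (X j)) ((eval x : MvPolynomial (Fin n) ℂ → ℂ) ∘ g) := hc
        _ = (Fin.cons (x j) y : Fin (n + 1) → ℂ) := by
            rw [eval_X]
            exact congrArg (fun t : Fin n → ℂ => (Fin.cons (x j) t : Fin (n + 1) → ℂ)) hgy
    rw [hcons, eval_eq_eval_mv_eval'] at h0
    show x j ∈ ((((r j).map (eval y)).roots.toFinset : Finset ℂ) : Set ℂ)
    rw [Finset.mem_coe, Multiset.mem_toFinset, Polynomial.mem_roots hpj]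
    exact h0

end LinDefAux

/-- **Deformation to isolated singularities by a generic linear term** (Lemma 3.3 of
Siersma–Tibăr, "Betti bounds of polynomials").
Let `f` be a polynomial of degree `d ≥ 2` on `ℂⁿ` with `dim Sing f ≥ 1` and let
`l = Σ aᵢxᵢ` be a generic linear form (genericity encoded by the nonvanishing of a
nonzero polynomial `P` at the coefficient vector `a`). Then for all `ε ≠ 0` in a small
punctured disk, `f_ε = f + ε·l` has at most isolated singularities (`Sing f_ε` is
finite) and the same degree-`d` part as `f`, hence the same singular set at
infinity `Σ^∞`. -/
theorem linear_deformation_isolates_singularities (n d : ℕ) (hn : 1 ≤ n) (hd : 2 ≤ d)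
    (f : MvPolynomial (Fin n) ℂ) (hdeg : f.totalDegree = d)
    (hdim : 1 ≤ adim (singSet f)) :
    ∃ P : MvPolynomial (Fin n) ℂ, P ≠ 0 ∧
      ∀ a : Fin n → ℂ, a ≠ 0 → eval a P ≠ 0 →
        ∃ δ > (0 : ℝ), ∀ ε : ℂ, ε ≠ 0 → ‖ε‖ < δ →
          (singSet (f + C ε * ∑ i, C (a i) * X i)).Finite ∧
          homogeneousComponent d (f + C ε * ∑ i, C (a i) * X i)
            = homogeneousComponent d f ∧
          coneSigmaInf (f + C ε * ∑ i, C (a i) * X i) d = coneSigmaInf f d := by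
  classical
  obtain ⟨Q, hQ0, hQ⟩ := LinDefAux.generic_fiber_finite (fun i => pderiv i f)
  have e : ∀ (y : Fin n → ℂ) (q : MvPolynomial (Fin n) ℂ),
      (aeval y : MvPolynomial (Fin n) ℂ →ₐ[ℂ] ℂ) q = eval y q := fun y q => by
    rw [← coe_aeval_eq_eval]; rfl
  refine ⟨aeval (fun i => - X i) Q, ?_, ?_⟩
  · intro h0
    apply hQ0
    have hinv : aeval (fun i => - X i : Fin n → MvPolynomial (Fin n) ℂ)
        (aeval (fun i => - X i : Fin n → MvPolynomial (Fin n) ℂ) Q) = Q := by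
      rw [comp_aeval_apply]
      simp only [map_neg, aeval_X, neg_neg]
      exact aeval_X_left_apply Q
    rw [h0, map_zero] at hinv
    exact hinv.symm
  · intro a ha hPa
    set qa : Polynomial ℂ := aeval (fun i => Polynomial.C (- a i) * Polynomial.X) Q with hqa
    have hqaeval : ∀ ε : ℂ, Polynomial.eval ε qa = eval (fun i => - a i * ε) Q := by
      intro ε
      calc Polynomial.eval ε qa = Polynomial.aeval ε qa :=
            (congrFun (Polynomial.coe_aeval_eq_eval ε) qa).symm
        _ = aeval (fun i => Polynomial.aeval ε
              (Polynomial.C (- a i) * Polynomial.X)) Q := comp_aeval_apply _ _ _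
        _ = aeval (fun i => - a i * ε) Q := by
            have h' : (fun i => Polynomial.aeval ε (Polynomial.C (- a i) * Polynomial.X))
                = fun i => - a i * ε := by
              funext i
              simp
            rw [h']
        _ = eval (fun i => - a i * ε) Q := e _ _
    have hq1 : Polynomial.eval 1 qa
        = eval a (aeval (fun i => - X i : Fin n → MvPolynomial (Fin n) ℂ) Q) := by
      rw [hqaeval, LinDefAux.eval_aeval']
      have h' : (fun i => eval a (- X i : MvPolynomial (Fin n) ℂ)) = fun i => - a i * (1 : ℂ) := by
        funext i
        simp
      rw [h']
    have hqa0 : qa ≠ 0 := by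
      intro h0
      apply hPa
      rw [← hq1, h0, Polynomial.eval_zero]
    set s : Finset ℝ := (qa.roots.toFinset.erase 0).image (fun z : ℂ => ‖z‖) with hs
    refine ⟨if hne : s.Nonempty then s.min' hne else 1, ?_, ?_⟩
    · split_ifs with hne
      · have hmem := s.min'_mem hne
        obtain ⟨z, hz, hzeq⟩ := Finset.mem_image.mp hmem
        have hz0 : z ≠ 0 := (Finset.mem_erase.mp hz).1
        rw [← hzeq]
        exact norm_pos_iff.mpr hz0
      · exact one_pos
    · intro ε hε0 hεδ
      have hQy : eval (fun i => - a i * ε) Q ≠ 0 := by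
        rw [← hqaeval]
        intro h0
        have hroot : ε ∈ qa.roots.toFinset.erase 0 := by
          rw [Finset.mem_erase, Multiset.mem_toFinset, Polynomial.mem_roots hqa0]
          exact ⟨hε0, h0⟩
        have habs : ‖ε‖ ∈ s := by
          rw [hs]
          exact Finset.mem_image_of_mem _ hroot
        have hne : s.Nonempty := ⟨_, habs⟩
        rw [dif_pos hne] at hεδ
        exact absurd (Finset.min'_le s _ habs) (not_le.mpr hεδ)
      have hde : ∀ i, pderiv i (∑ j, C (a j) * X j : MvPolynomial (Fin n) ℂ) = C (a i) := by
        intro i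
        rw [map_sum, Finset.sum_eq_single i]
        · rw [pderiv_C_mul, pderiv_X_self, mul_one]
        · intro j _ hji
          rw [pderiv_C_mul, pderiv_X_of_ne hji, mul_zero]
        · intro hi
          exact absurd (Finset.mem_univ i) hi
      have hpd : ∀ (x : Fin n → ℂ) i,
          eval x (pderiv i (f + C ε * ∑ j, C (a j) * X j)) = eval x (pderiv i f) + ε * a i := by
        intro x i
        rw [map_add, pderiv_C_mul, hde, eval_add, eval_mul, eval_C, eval_C]
      have hlow : (C ε * ∑ i, C (a i) * X i : MvPolynomial (Fin n) ℂ).totalDegree < d := by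
        refine lt_of_le_of_lt ?_ (lt_of_lt_of_le one_lt_two hd)
        refine (totalDegree_mul _ _).trans ?_
        rw [totalDegree_C, zero_add]
        refine (totalDegree_finset_sum _ _).trans ?_
        refine Finset.sup_le fun i _ => ?_
        refine (totalDegree_mul _ _).trans ?_
        rw [totalDegree_C, zero_add]
        exact le_of_eq (totalDegree_X i)
      have h2 : homogeneousComponent d (f + C ε * ∑ i, C (a i) * X i)
          = homogeneousComponent d f := by
        rw [map_add, homogeneousComponent_eq_zero _ _ hlow, add_zero]
      refine ⟨?_, h2, ?_⟩
      · have hset : singSet (f + C ε * ∑ i, C (a i) * X i)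
            = {x : Fin n → ℂ | ∀ i, eval x (pderiv i f) = - a i * ε} := by
          ext x
          simp only [singSet, Set.mem_setOf_eq]
          refine forall_congr' fun i => ?_
          rw [hpd]
          constructor
          · intro h
            have := eq_neg_of_add_eq_zero_left h
            rw [this]
            ring
          · intro h
            rw [h]
            ring
        rw [hset]
        exact hQ _ hQy
      · simp only [coneSigmaInf, h2]

end
end

section
/- Let n ≥ 2, d > 2, and f = (a₁z₁² + ⋯ + a_{n-1}z_{n-1}²)x^{d-2} + c₁z₁^d + ⋯ + c_{n-1}z_{n-1}^d with all a_i, c_i nonzero and generic. Then the singular locus of f is exactly the line L = {z₁ = ⋯ = z_{n-1} = 0}, and f has Morse (A₁) transversal singularity type along L away from the origin. -/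
open MvPolynomial

noncomputable section

/-- The local Milnor number of the hypersurface `{g = 0}` at the point `p`: the
ℂ-dimension of the quotient of the formal power series ring (the completed local ring
of `ℂᵐ` at `p`) by the Jacobian ideal of `g` translated to the origin. -/
def milnor {m : ℕ} (g : MvPolynomial (Fin m) ℂ) (p : Fin m → ℂ) : ℕ :=
  Module.finrank ℂ (MvPowerSeries (Fin m) ℂ ⧸
    Ideal.span {h : MvPowerSeries (Fin m) ℂ |
      ∃ i, h = ((pderiv i (MvPolynomial.bind₁ (fun j => X j + C (p j)) g) :
        MvPolynomial (Fin m) ℂ) : MvPowerSeries (Fin m) ℂ)})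

lemma mem_span_X_of_cc_zero {m : ℕ} (h : MvPowerSeries (Fin m) ℂ)
    (h0 : MvPowerSeries.constantCoeff h = 0) :
    h ∈ Ideal.span (Set.range (MvPowerSeries.X : Fin m → MvPowerSeries (Fin m) ℂ)) := by
  classical
  set g : Fin m → MvPowerSeries (Fin m) ℂ := fun i β =>
    if ∀ j, j < i → β j = 0 then
      MvPowerSeries.coeff (β + Finsupp.single i 1) h else 0 with hg
  have hgc : ∀ i β, MvPowerSeries.coeff β (g i) =
      if ∀ j, j < i → β j = 0 then
        MvPowerSeries.coeff (β + Finsupp.single i 1) h else 0 := fun i β => rfl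
  have hdecomp : h = ∑ i : Fin m, MvPowerSeries.X i * g i := by
    apply MvPowerSeries.ext
    intro α
    rw [map_sum]
    by_cases hα : α = 0
    · subst hα
      rw [Finset.sum_eq_zero]
      · simpa [MvPowerSeries.coeff_zero_eq_constantCoeff] using h0
      · intro i _
        rw [MvPowerSeries.X_def, MvPowerSeries.coeff_monomial_mul, if_neg]
        simp [Finsupp.single_le_iff]
    · have hsupp : α.support.Nonempty := by
        rw [Finsupp.support_nonempty_iff]; exact hα
      set i0 := α.support.min' hsupp with hi0
      have hi0mem : i0 ∈ α.support := α.support.min'_mem hsupp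
      have hi0ne : α i0 ≠ 0 := Finsupp.mem_support_iff.mp hi0mem
      have hmin : ∀ j, j < i0 → α j = 0 := by
        intro j hj
        by_contra hne
        exact absurd (α.support.min'_le j (Finsupp.mem_support_iff.mpr hne)) (not_le.mpr hj)
      rw [Finset.sum_eq_single_of_mem i0 (Finset.mem_univ _)]
      · rw [MvPowerSeries.X_def, MvPowerSeries.coeff_monomial_mul, if_pos
          (by rw [Finsupp.single_le_iff]; omega), one_mul, hgc]
        have hcond : ∀ j, j < i0 → (α - Finsupp.single i0 1 : Fin m →₀ ℕ) j = 0 := by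
          intro j hj
          rw [Finsupp.tsub_apply, Finsupp.single_apply, if_neg (by exact hj.ne'), Nat.sub_zero]
          exact hmin j hj
        have hres : (α - Finsupp.single i0 1) + Finsupp.single i0 1 = α := by
          ext j
          rcases eq_or_ne j i0 with rfl | hne
          · simp only [Finsupp.add_apply, Finsupp.tsub_apply, Finsupp.single_eq_same]
            omega
          · simp [Finsupp.single_apply, hne.symm, Finsupp.tsub_apply]
        rw [if_pos hcond, hres]
      · intro i _ hne
        rw [MvPowerSeries.X_def, MvPowerSeries.coeff_monomial_mul]
        by_cases hαi : α i = 0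
        · rw [if_neg]
          rw [Finsupp.single_le_iff]
          omega
        · have hii : i0 < i := by
            rcases lt_or_gt_of_ne hne with hlt | hgt
            · exact absurd (hmin i hlt) hαi
            · exact hgt
          split_ifs with hle
          · rw [one_mul, hgc, if_neg, ]
            push_neg
            refine ⟨i0, hii, ?_⟩
            rw [Finsupp.tsub_apply, Finsupp.single_apply, if_neg (by exact hii.ne'), Nat.sub_zero]
            exact hi0ne
          · rfl
  rw [hdecomp]
  exact Ideal.sum_mem _ fun i _ =>
    Ideal.mul_mem_right _ _ (Ideal.subset_span ⟨i, rfl⟩)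


lemma finrank_quot_span_X {m : ℕ} (I : Ideal (MvPowerSeries (Fin m) ℂ))
    (hI : I = Ideal.span (Set.range (MvPowerSeries.X : Fin m → MvPowerSeries (Fin m) ℂ))) :
    Module.finrank ℂ (MvPowerSeries (Fin m) ℂ ⧸ I) = 1 := by
  classical
  set cc : MvPowerSeries (Fin m) ℂ →ₐ[ℂ] ℂ :=
    { (MvPowerSeries.constantCoeff : MvPowerSeries (Fin m) ℂ →+* ℂ) with
      commutes' := fun r => by simp [MvPowerSeries.algebraMap_apply] } with hcc
  have hker : RingHom.ker cc = I := by
    rw [hI]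
    apply le_antisymm
    · intro h hh
      exact mem_span_X_of_cc_zero h hh
    · rw [Ideal.span_le]
      rintro _ ⟨i, rfl⟩
      simp [RingHom.mem_ker, hcc, MvPowerSeries.constantCoeff_X]
  have hsurj : Function.Surjective cc := fun r =>
    ⟨(MvPowerSeries.C r : MvPowerSeries (Fin m) ℂ), by simp [hcc]⟩
  have e := Ideal.quotientKerAlgEquivOfSurjective (f := cc) hsurj
  subst hker
  rw [e.toLinearEquiv.finrank_eq, Module.finrank_self]

lemma milnor_eq_one {m d : ℕ} (hd : 2 < d) (a c : Fin m → ℂ)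
    (ha : ∀ i, a i ≠ 0) (hc : ∀ i, c i ≠ 0) (v0 : ℂ) (hv0 : v0 ≠ 0) :
    milnor ((∑ i, C (a i) * X i ^ 2) * C v0 ^ (d-2) + ∑ i, C (c i) * X i ^ d) 0 = 1 := by
  classical
  set g : MvPolynomial (Fin m) ℂ :=
    (∑ i, C (a i) * X i ^ 2) * C v0 ^ (d-2) + ∑ i, C (c i) * X i ^ d with hgdef
  have hbind : MvPolynomial.bind₁ (fun j => X j + C ((0 : Fin m → ℂ) j)) g = g := by
    simp [bind₁_X_left]
  set U : Fin m → MvPolynomial (Fin m) ℂ :=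
    fun j => C (2 * a j * v0^(d-2)) + C ((d:ℂ) * c j) * X j ^ (d-2) with hUdef
  have hpd : ∀ j, pderiv j g = X j * U j := by
    intro j
    rw [hgdef, map_add, pderiv_mul, map_sum, map_sum]
    have h1 : ∀ i, pderiv j (C (a i) * X i ^ 2) =
        if j = i then C (a i) * (2 * X i) else 0 := by
      intro i
      rcases eq_or_ne j i with rfl | hne
      · rw [pderiv_C_mul, pderiv_pow, pderiv_X_self, if_pos rfl]; norm_num
      · rw [pderiv_C_mul, pderiv_pow, pderiv_X_of_ne hne.symm, if_neg hne]; ring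
    have h3 : ∀ i, pderiv j (C (c i) * X i ^ d) =
        if j = i then C (c i) * ((d : MvPolynomial (Fin m) ℂ) * X i ^ (d-1)) else 0 := by
      intro i
      rcases eq_or_ne j i with rfl | hne
      · rw [pderiv_C_mul, pderiv_pow, pderiv_X_self, if_pos rfl]; ring
      · rw [pderiv_C_mul, pderiv_pow, pderiv_X_of_ne hne.symm, if_neg hne]; ring
    have h2 : (pderiv j) (C v0 ^ (d - 2)) = 0 := by
      rw [pderiv_pow, pderiv_C]; ring
    rw [Finset.sum_congr rfl fun i _ => h1 i, Finset.sum_congr rfl fun i _ => h3 i,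
      Finset.sum_ite_eq Finset.univ j, Finset.sum_ite_eq Finset.univ j,
      if_pos (Finset.mem_univ j), if_pos (Finset.mem_univ j), h2, hUdef]
    rw [show d - 1 = (d-2)+1 from by omega, pow_succ]
    simp only [map_mul, map_pow, map_ofNat, map_natCast]
    ring
  have hU : ∀ j, IsUnit ((U j : MvPolynomial (Fin m) ℂ) : MvPowerSeries (Fin m) ℂ) := by
    intro j
    rw [MvPowerSeries.isUnit_iff_constantCoeff]
    rw [hUdef]
    push_cast
    simp only [map_add, map_mul, map_pow, MvPowerSeries.constantCoeff_C,
      MvPowerSeries.constantCoeff_X]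
    rw [zero_pow (by omega : d - 2 ≠ 0)]
    simp only [mul_zero, add_zero]
    exact isUnit_iff_ne_zero.mpr (by
      exact mul_ne_zero (mul_ne_zero two_ne_zero (ha j)) (pow_ne_zero _ hv0))
  rw [milnor]
  apply finrank_quot_span_X
  have hset : {h : MvPowerSeries (Fin m) ℂ |
      ∃ i, h = ((pderiv i (MvPolynomial.bind₁ (fun j => X j + C ((0 : Fin m → ℂ) j)) g) :
        MvPolynomial (Fin m) ℂ) : MvPowerSeries (Fin m) ℂ)} =
      {h : MvPowerSeries (Fin m) ℂ | ∃ i, h = ((pderiv i g : MvPolynomial (Fin m) ℂ) :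
        MvPowerSeries (Fin m) ℂ)} := by
    rw [hbind]
  rw [hset]
  apply le_antisymm
  · rw [Ideal.span_le]
    rintro _ ⟨i, rfl⟩
    rw [hpd i, coe_mul, coe_X]
    exact Ideal.mul_mem_right _ _ (Ideal.subset_span ⟨i, rfl⟩)
  · rw [Ideal.span_le]
    rintro _ ⟨i, rfl⟩
    obtain ⟨u, hu⟩ := hU i
    have hXi : (MvPowerSeries.X i : MvPowerSeries (Fin m) ℂ) =
        ((pderiv i g : MvPolynomial (Fin m) ℂ) : MvPowerSeries (Fin m) ℂ) * ↑u⁻¹ := by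
      rw [hpd i, coe_mul, coe_X, ← hu, mul_assoc, Units.mul_inv, mul_one]
    rw [hXi]
    refine Ideal.mul_mem_right _ _ (Ideal.subset_span ⟨i, rfl⟩)


def ωe (e : ℕ) : ℂ := Complex.exp (2 * Real.pi * Complex.I / e)

lemma hωprim (e : ℕ) [NeZero e] : IsPrimitiveRoot (ωe e) e :=
  Complex.isPrimitiveRoot_exp e (NeZero.ne e)

lemma ω_pow_mod (e : ℕ) [NeZero e] (n : ℕ) : ωe e ^ (n % e) = ωe e ^ n := by
  conv_rhs => rw [← Nat.div_add_mod n e]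
  rw [pow_add, pow_mul, (hωprim e).pow_eq_one, one_pow, one_mul]

def Hpoly (m e : ℕ) [NeZero e] : MvPolynomial (Fin m) ℂ :=
  ∏ k : Fin m → ZMod e, ∑ j : Fin m, C (ωe e ^ (k j).val) * X j

lemma eval_Hpoly (m e : ℕ) [NeZero e] (w : Fin m → ℂ) :
    eval w (Hpoly m e) = ∏ k : Fin m → ZMod e, ∑ j : Fin m, ωe e ^ (k j).val * w j := by
  simp [Hpoly]

lemma eval_bind1 {σ τ : Type*} (x : τ → ℂ) (f : σ → MvPolynomial τ ℂ)
    (φ : MvPolynomial σ ℂ) :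
    eval x (bind₁ f φ) = eval (fun i => eval x (f i)) φ := by
  rw [MvPolynomial.eval, MvPolynomial.eval, eval₂Hom_bind₁]

lemma bind_Hpoly (m e : ℕ) [NeZero e] (t : Fin m) :
    bind₁ (fun i => if i = t then C (ωe e) * X i else X i) (Hpoly m e) = Hpoly m e := by
  apply MvPolynomial.funext
  intro x
  rw [eval_bind1]
  have hx : (fun i => eval x (if i = t then C (ωe e) * X i else X i)) =
      fun i => if i = t then ωe e * x i else x i := by
    funext i
    by_cases hne : i = t <;> simp [hne]
  rw [hx, eval_Hpoly, eval_Hpoly]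
  set ε : (Fin m → ZMod e) ≃ (Fin m → ZMod e) :=
    Equiv.piCongrRight (fun j => if j = t then Equiv.addRight (1 : ZMod e) else Equiv.refl _)
    with hε
  rw [← Equiv.prod_comp ε (fun k => ∑ j : Fin m, ωe e ^ (k j).val * x j)]
  apply Finset.prod_congr rfl
  intro k _
  apply Finset.sum_congr rfl
  intro j _
  rcases eq_or_ne j t with rfl | hne
  · have hεk : (ε k) j = k j + 1 := by simp [hε, Equiv.piCongrRight]
    rw [hεk, if_pos rfl, ZMod.val_add, ω_pow_mod, pow_add, ZMod.val_one_eq_one_mod, ω_pow_mod,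
      pow_one]
    ring
  · have hεk : (ε k) j = k j := by simp [hε, Equiv.piCongrRight, hne]
    rw [hεk, if_neg hne]

lemma bind_scale_monomial {m : ℕ} (t : Fin m) (r : ℂ) (α : Fin m →₀ ℕ) (s : ℂ) :
    bind₁ (fun i => if i = t then C r * X i else X i) (monomial α s) =
      C (r ^ α t) * monomial α s := by
  classical
  rw [bind₁_monomial]
  have h1 : ∀ i ∈ α.support, (if i = t then C r * X i else (X i : MvPolynomial (Fin m) ℂ)) ^ α i =
      (C r) ^ (if i = t then α i else 0) * X i ^ α i := by
    intro i _
    rcases eq_or_ne i t with rfl | hne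
    · rw [if_pos rfl, if_pos rfl, mul_pow]
    · rw [if_neg hne, if_neg hne, pow_zero, one_mul]
  rw [Finset.prod_congr rfl h1, Finset.prod_mul_distrib]
  have h2 : ∏ i ∈ α.support, (C r : MvPolynomial (Fin m) ℂ) ^ (if i = t then α i else 0) =
      C (r ^ α t) := by
    by_cases ht : t ∈ α.support
    · simp only [pow_ite, pow_zero]
      rw [Finset.prod_ite_eq' α.support t (fun i => (C r : MvPolynomial (Fin m) ℂ) ^ α i),
        if_pos ht, ← C_pow]
    · have hα : α t = 0 := Finsupp.notMem_support_iff.mp ht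
      rw [Finset.prod_congr rfl (fun i hi => ?_), Finset.prod_const_one, hα, pow_zero, map_one]
      rw [if_neg (by rintro rfl; exact ht hi), pow_zero]
  rw [h2, monomial_eq, Finsupp.prod]
  ring

lemma coeff_bind_scale {m : ℕ} (t : Fin m) (r : ℂ) (φ : MvPolynomial (Fin m) ℂ)
    (α : Fin m →₀ ℕ) :
    coeff α (bind₁ (fun i => if i = t then C r * X i else X i) φ) = r ^ α t * coeff α φ := by
  classical
  conv_lhs => rw [φ.as_sum]
  rw [map_sum]
  rw [Finset.sum_congr rfl (fun β _ => bind_scale_monomial t r β (coeff β φ))]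
  rw [coeff_sum]
  simp only [coeff_C_mul, coeff_monomial, mul_ite, mul_zero]
  rw [Finset.sum_ite_eq' φ.support α (fun β => r ^ β t * coeff β φ)]
  by_cases hα : α ∈ φ.support
  · rw [if_pos hα]
  · rw [if_neg hα, notMem_support_iff.mp hα, mul_zero]




lemma Hpoly_support_dvd (m e : ℕ) [NeZero e] :
    ∀ α ∈ (Hpoly m e).support, ∀ t, e ∣ α t := by
  intro α hα t
  have h := coeff_bind_scale t (ωe e) (Hpoly m e) α
  rw [bind_Hpoly] at h
  have hc : coeff α (Hpoly m e) ≠ 0 := mem_support_iff.mp hα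
  have h1 : ωe e ^ α t = 1 :=
    mul_right_cancel₀ hc (h.symm.trans (one_mul _).symm)
  exact ((hωprim e).pow_eq_one_iff_dvd _).mp h1

def Gpoly (m e : ℕ) [NeZero e] : MvPolynomial (Fin m) ℂ :=
  ∑ α ∈ (Hpoly m e).support,
    monomial (Finsupp.mapRange (· / e) (Nat.zero_div e) α) (coeff α (Hpoly m e))

lemma eval_pow_Gpoly (m e : ℕ) [NeZero e] (w : Fin m → ℂ) :
    eval (fun j => w j ^ e) (Gpoly m e) = eval w (Hpoly m e) := by
  conv_rhs => rw [(Hpoly m e).as_sum]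
  rw [Gpoly, map_sum, map_sum]
  apply Finset.sum_congr rfl
  intro α hα
  rw [eval_monomial, eval_monomial]
  congr 1
  rw [Finsupp.prod_of_support_subset _ Finsupp.support_mapRange _ (fun i _ => pow_zero _),
      Finsupp.prod]
  apply Finset.prod_congr rfl
  intro i _
  rw [Finsupp.mapRange_apply, ← pow_mul, Nat.mul_div_cancel' (Hpoly_support_dvd m e α hα i)]


def Qsub (m d : ℕ) (S : Finset (Fin m)) : Fin m → MvPolynomial (Fin m ⊕ Fin m) ℂ :=
  fun j => if j ∈ S then
    C 4 * X (Sum.inl j) ^ d * ∏ k ∈ S.erase j, (C ((d:ℂ)^2) * X (Sum.inr k) ^ 2) else 0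

def PS (m d : ℕ) [NeZero (d-2)] (S : Finset (Fin m)) : MvPolynomial (Fin m ⊕ Fin m) ℂ :=
  bind₁ (Qsub m d S) (Gpoly m (d-2))

lemma eval_PS (m d : ℕ) [NeZero (d-2)] (S : Finset (Fin m)) (a c : Fin m → ℂ) :
    eval (Sum.elim a c) (PS m d S) =
      eval (fun j => if j ∈ S then
        4 * a j ^ d * ∏ k ∈ S.erase j, ((d:ℂ)^2 * c k ^ 2) else 0) (Gpoly m (d-2)) := by
  rw [PS, eval_bind1]
  have h : (fun i => eval (Sum.elim a c) (Qsub m d S i)) = fun j => if j ∈ S then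
      (4 : ℂ) * a j ^ d * ∏ k ∈ S.erase j, ((d:ℂ)^2 * c k ^ 2) else 0 := by
    funext j
    rw [Qsub]
    split_ifs with hj <;> simp
  rw [h]

lemma PS_eval_zero (m d : ℕ) (hd : 2 < d) [NeZero (d-2)]
    (a c : Fin m → ℂ) (x : ℂ) (hx : x ≠ 0) (z : Fin m → ℂ)
    (hc : ∀ i, c i ≠ 0)
    (S : Finset (Fin m)) (hS : ∀ j, j ∈ S ↔ z j ≠ 0)
    (hrel : ∀ j ∈ S, 2 * a j * x^(d-2) + d * c j * z j^(d-2) = 0)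
    (hsum : ∑ j, a j * z j ^ 2 = 0) :
    eval (Sum.elim a c) (PS m d S) = 0 := by
  classical
  obtain ⟨e, rfl⟩ : ∃ e, d = e + 2 := ⟨d - 2, by omega⟩
  simp only [Nat.add_sub_cancel] at *
  haveI : NeZero e := ⟨by omega⟩
  have he0 : e ≠ 0 := by omega
  have hdC : ((e:ℂ) + 2) ≠ 0 := by
    have : ((e + 2 : ℕ) : ℂ) ≠ 0 := Nat.cast_ne_zero.mpr (by omega)
    push_cast at this; exact this
  set lam : ℂ := ∏ k ∈ S, (((e+2:ℕ):ℂ)^2 * c k^2) with hlam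
  obtain ⟨μ, hμ⟩ := IsAlgClosed.exists_pow_nat_eq (k := ℂ) (lam / x^(2*e)) (Nat.pos_of_ne_zero he0)
  have hkey : ∀ j, (if j ∈ S then μ * (a j * z j^2) else 0) ^ e = (if j ∈ S then
      4 * a j ^ (e+2) * ∏ k ∈ S.erase j, (((e+2:ℕ):ℂ)^2 * c k ^ 2) else 0) := by
    intro j
    by_cases hj : j ∈ S
    · rw [if_pos hj, if_pos hj]
      have hzj : z j ^ e = -(2 * a j * x^e) / (((e+2:ℕ):ℂ) * c j) := by
        have h := hrel j hj
        have hd2 : ((e+2:ℕ):ℂ) ≠ 0 := Nat.cast_ne_zero.mpr (by omega)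
        rw [eq_div_iff (mul_ne_zero hd2 (hc j))]
        linear_combination h
      have hprod : lam = (((e+2:ℕ):ℂ)^2 * c j^2) * ∏ k ∈ S.erase j, (((e+2:ℕ):ℂ)^2 * c k^2) :=
        (Finset.mul_prod_erase S _ hj).symm
      have had : a j ^ (e+2) = a j ^ e * a j ^ 2 := by rw [← pow_add]
      calc (μ * (a j * z j ^ 2)) ^ e
          = μ ^ e * (a j ^ e * (z j ^ e) ^ 2) := by
            rw [mul_pow, mul_pow, ← pow_mul, ← pow_mul, mul_comm 2 e]
      _ = (lam / x^(2*e)) * (a j ^ e * ((-(2 * a j * x^e) / (((e+2:ℕ):ℂ) * c j))) ^ 2) := by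
            rw [hμ, hzj]
      _ = 4 * a j ^ (e+2) * ∏ k ∈ S.erase j, (((e+2:ℕ):ℂ)^2 * c k ^ 2) := by
            rw [hprod, had]
            have hxe : x ^ (2*e) = (x^e)^2 := by rw [mul_comm, pow_mul]
            rw [hxe]
            have hcj := hc j
            have hd2 : ((e+2:ℕ):ℂ) ≠ 0 := Nat.cast_ne_zero.mpr (by omega)
            have hxen : (x:ℂ)^e ≠ 0 := pow_ne_zero _ hx
            field_simp
            ring
    · rw [if_neg hj, if_neg hj, zero_pow he0]
  rw [eval_PS]
  have hfun : (fun j => if j ∈ S then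
      4 * a j ^ (e+2) * ∏ k ∈ S.erase j, (((e+2:ℕ):ℂ)^2 * c k ^ 2) else 0) =
      fun j => (if j ∈ S then μ * (a j * z j^2) else 0) ^ e := by
    funext j; rw [hkey]
  rw [hfun]
  simp only [Nat.add_sub_cancel]
  rw [eval_pow_Gpoly m e, eval_Hpoly m e]
  apply Finset.prod_eq_zero (Finset.mem_univ (fun _ => (0 : ZMod e)))
  have hsum2 : ∑ j, (if j ∈ S then μ * (a j * z j^2) else 0) = 0 := by
    rw [Finset.sum_ite_mem, Finset.univ_inter, ← Finset.mul_sum]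
    have h5 : ∑ j ∈ S, a j * z j ^ 2 = ∑ j, a j * z j ^ 2 := by
      apply Finset.sum_subset (Finset.subset_univ S)
      intro j _ hj
      have hz0 : z j = 0 := by_contra fun hne => hj ((hS j).mpr hne)
      rw [hz0]; ring
    rw [h5, hsum, mul_zero]
  simpa [ZMod.val_zero] using hsum2


lemma abs_ωe (e : ℕ) [NeZero e] : ‖ωe e‖ = 1 := by
  have h1 : ‖ωe e‖ ^ e = 1 := by
    rw [← norm_pow, (hωprim e).pow_eq_one, norm_one]
  have h2 : (0:ℝ) ≤ ‖ωe e‖ := norm_nonneg _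
  rcases lt_trichotomy (‖ωe e‖) 1 with hlt | heq | hgt
  · exact absurd h1 (by simpa using (pow_lt_one₀ h2 hlt (NeZero.ne e)).ne)
  · exact heq
  · exact absurd h1 (by simpa using (one_lt_pow₀ hgt (NeZero.ne e)).ne')

lemma PS_ne_zero (m d : ℕ) (hm : 1 ≤ m) (hd : 2 < d) [NeZero (d-2)]
    (S : Finset (Fin m)) (hS : S.Nonempty) : PS m d S ≠ 0 := by
  classical
  intro h0
  have hdC : (d:ℂ) ≠ 0 := Nat.cast_ne_zero.mpr (by omega)
  set b : ℝ := (2*(m:ℝ))⁻¹ with hb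
  have hm1 : (1:ℝ) ≤ (m:ℝ) := by exact_mod_cast hm
  have hb0 : 0 < b := by rw [hb]; positivity
  have hb1 : b ≤ 1 := by
    rw [hb]
    apply inv_le_one_of_one_le₀
    linarith
  set wC : Fin m → ℂ := fun j => if j ∈ S then ((b:ℂ))^(j.val) else 0 with hw
  have hex : ∀ j : Fin m, ∃ r : ℂ, r ^ d = (((b:ℂ))^(j.val)) ^ (d-2) / 4 :=
    fun j => IsAlgClosed.exists_pow_nat_eq _ (by omega)
  choose aa haa using hex
  have h1 : eval (Sum.elim aa (fun _ => ((d:ℂ))⁻¹)) (PS m d S) = 0 := by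
    rw [h0, map_zero]
  rw [eval_PS] at h1
  have h2 : (fun j => if j ∈ S then
      4 * aa j ^ d * ∏ k ∈ S.erase j, ((d:ℂ)^2 * ((fun _ => ((d:ℂ))⁻¹) k) ^ 2) else 0) =
      fun j => wC j ^ (d-2) := by
    funext j
    by_cases hj : j ∈ S
    · rw [if_pos hj, hw]
      simp only [if_pos hj]
      have hprod : ∏ k ∈ S.erase j, ((d:ℂ)^2 * ((fun _ => ((d:ℂ))⁻¹) k) ^ 2) = 1 :=
        Finset.prod_eq_one (fun k _ => by field_simp)
      rw [hprod, haa j]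
      field_simp
    · rw [if_neg hj, hw]
      simp only [if_neg hj]
      rw [zero_pow (by omega : d - 2 ≠ 0)]
  rw [h2, eval_pow_Gpoly m (d-2), eval_Hpoly m (d-2)] at h1
  obtain ⟨k, -, hk0⟩ := Finset.prod_eq_zero_iff.mp h1
  -- now derive contradiction from hk0
  have hj0mem := S.min'_mem hS
  set j0 := S.min' hS with hj0
  have habs1 : ∀ (v : ℕ) (j : Fin m),
      ‖ωe (d-2) ^ v * ((b:ℂ))^(j.val)‖ = b ^ j.val := by
    intro v j
    rw [norm_mul, norm_pow, norm_pow, abs_ωe, one_pow, one_mul, Complex.norm_real,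
      Real.norm_eq_abs, abs_of_pos hb0]
  have hsplit : ∑ j : Fin m, ωe (d-2) ^ ((k j).val) * wC j =
      ωe (d-2) ^ ((k j0).val) * ((b:ℂ))^(j0.val) +
      ∑ j ∈ S.erase j0, ωe (d-2) ^ ((k j).val) * ((b:ℂ))^(j.val) := by
    rw [hw]
    simp only [mul_ite, mul_zero]
    rw [Finset.sum_ite_mem, Finset.univ_inter,
      ← Finset.add_sum_erase S (fun j => ωe (d-2) ^ ((k j).val) * ((b:ℂ))^(j.val)) hj0mem]
  have hbound : ‖∑ j ∈ S.erase j0,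
      ωe (d-2) ^ ((k j).val) * ((b:ℂ))^(j.val)‖ ≤ (m:ℝ) * b ^ (j0.val + 1) := by
    calc ‖∑ j ∈ S.erase j0, ωe (d-2) ^ ((k j).val) * ((b:ℂ))^(j.val)‖
        ≤ ∑ j ∈ S.erase j0, ‖ωe (d-2) ^ ((k j).val) * ((b:ℂ))^(j.val)‖ :=
          norm_sum_le _ _
      _ = ∑ j ∈ S.erase j0, b ^ (j.val) := Finset.sum_congr rfl (fun j _ => habs1 _ _)
      _ ≤ (S.erase j0).card • (b ^ (j0.val + 1)) := by
          apply Finset.sum_le_card_nsmul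
          intro j hjmem
          have hjS := Finset.mem_of_mem_erase hjmem
          have hjne : j ≠ j0 := Finset.ne_of_mem_erase hjmem
          have hlt : j0 < j := lt_of_le_of_ne (S.min'_le j hjS) (Ne.symm hjne)
          exact pow_le_pow_of_le_one hb0.le hb1 (by
            have := (Fin.lt_iff_val_lt_val).mp hlt; omega)
      _ ≤ (m:ℝ) * b ^ (j0.val + 1) := by
          rw [nsmul_eq_mul]
          apply mul_le_mul_of_nonneg_right _ (by positivity)
          have hcard : (S.erase j0).card ≤ m := by
            have := Finset.card_le_univ (S.erase j0)
            simpa using this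
          exact_mod_cast hcard
  have hmb : (m:ℝ) * b ^ (j0.val + 1) = b ^ (j0.val) / 2 := by
    rw [pow_succ, hb]
    have hmne : (m:ℝ) ≠ 0 := by linarith
    field_simp
  have hfirst : ‖ωe (d-2) ^ ((k j0).val) * ((b:ℂ))^(j0.val)‖ = b ^ j0.val :=
    habs1 _ _
  have htri : ‖ωe (d-2) ^ ((k j0).val) * ((b:ℂ))^(j0.val)‖ ≤
      ‖∑ j : Fin m, ωe (d-2) ^ ((k j).val) * wC j‖ +
      ‖∑ j ∈ S.erase j0, ωe (d-2) ^ ((k j).val) * ((b:ℂ))^(j.val)‖ := by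
    rw [hsplit]
    have := norm_add_le
      (ωe (d-2) ^ ((k j0).val) * ((b:ℂ))^(j0.val) +
        ∑ j ∈ S.erase j0, ωe (d-2) ^ ((k j).val) * ((b:ℂ))^(j.val))
      (-(∑ j ∈ S.erase j0, ωe (d-2) ^ ((k j).val) * ((b:ℂ))^(j.val)))
    simpa using this
  rw [hk0, norm_zero, zero_add] at htri
  have hpos : 0 < b ^ j0.val := by positivity
  rw [hfirst] at htri
  have := le_trans htri (le_trans hbound (le_of_eq hmb))
  linarith


lemma pd_zero {m d : ℕ} (hd : 2 < d) (a c : Fin m → ℂ) :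
    pderiv (0 : Fin (m+1))
      ((∑ i : Fin m, C (a i) * (X (i.succ) : MvPolynomial (Fin (m + 1)) ℂ) ^ 2) * (X 0) ^ (d - 2)
        + ∑ i : Fin m, C (c i) * (X (i.succ)) ^ d) =
    (∑ i : Fin m, C (a i) * (X (i.succ) : MvPolynomial (Fin (m + 1)) ℂ) ^ 2) *
      (((d-2:ℕ) : MvPolynomial (Fin (m+1)) ℂ) * X 0 ^ (d - 2 - 1)) := by
  rw [map_add, pderiv_mul]
  have hA : pderiv (0 : Fin (m+1)) (∑ i : Fin m, C (a i) *
      (X (i.succ) : MvPolynomial (Fin (m + 1)) ℂ) ^ 2) = 0 := by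
    rw [map_sum]
    apply Finset.sum_eq_zero
    intro i _
    rw [pderiv_C_mul, pderiv_pow, pderiv_X_of_ne (Fin.succ_ne_zero i)]
    ring
  have hB : pderiv (0 : Fin (m+1)) ((X 0 : MvPolynomial (Fin (m+1)) ℂ) ^ (d-2)) =
      ((d-2:ℕ) : MvPolynomial (Fin (m+1)) ℂ) * X 0 ^ (d-2-1) := by
    rw [pderiv_pow, pderiv_X_self, mul_one]
  have hC : pderiv (0 : Fin (m+1)) (∑ i : Fin m, C (c i) *
      (X (i.succ) : MvPolynomial (Fin (m + 1)) ℂ) ^ d) = 0 := by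
    rw [map_sum]
    apply Finset.sum_eq_zero
    intro i _
    rw [pderiv_C_mul, pderiv_pow, pderiv_X_of_ne (Fin.succ_ne_zero i)]
    ring
  rw [hA, hB, hC, zero_mul, add_zero, zero_add]

lemma pd_succ {m d : ℕ} (hd : 2 < d) (a c : Fin m → ℂ) (j : Fin m) :
    pderiv (j.succ)
      ((∑ i : Fin m, C (a i) * (X (i.succ) : MvPolynomial (Fin (m + 1)) ℂ) ^ 2) * (X 0) ^ (d - 2)
        + ∑ i : Fin m, C (c i) * (X (i.succ)) ^ d) =
    X j.succ * (C (2 * a j) * (X 0 : MvPolynomial (Fin (m + 1)) ℂ) ^ (d-2)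
      + C ((d:ℂ) * c j) * X j.succ ^ (d-2)) := by
  rw [map_add, pderiv_mul]
  have hA : pderiv (j.succ) (∑ i : Fin m, C (a i) *
      (X (i.succ) : MvPolynomial (Fin (m + 1)) ℂ) ^ 2) = C (a j) * (2 * X j.succ) := by
    rw [map_sum]
    rw [Finset.sum_congr rfl (fun i _ => ?_), Finset.sum_ite_eq Finset.univ j
      (fun i => C (a i) * (2 * (X (i.succ) : MvPolynomial (Fin (m + 1)) ℂ))),
      if_pos (Finset.mem_univ j)]
    rcases eq_or_ne j i with rfl | hne
    · rw [pderiv_C_mul, pderiv_pow, pderiv_X_self, if_pos rfl]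
      norm_num
    · rw [pderiv_C_mul, pderiv_pow, pderiv_X_of_ne (fun h => hne (Fin.succ_injective _ h.symm)),
        if_neg hne]
      ring
  have hB : pderiv (j.succ) ((X 0 : MvPolynomial (Fin (m+1)) ℂ) ^ (d-2)) = 0 := by
    rw [pderiv_pow, pderiv_X_of_ne (Fin.succ_ne_zero j).symm]
    ring
  have hC : pderiv (j.succ) (∑ i : Fin m, C (c i) *
      (X (i.succ) : MvPolynomial (Fin (m + 1)) ℂ) ^ d) =
      C (c j) * ((d : MvPolynomial (Fin (m+1)) ℂ) * X j.succ ^ (d-1)) := by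
    rw [map_sum]
    rw [Finset.sum_congr rfl (fun i _ => ?_), Finset.sum_ite_eq Finset.univ j
      (fun i => C (c i) * ((d : MvPolynomial (Fin (m+1)) ℂ) *
        (X (i.succ) : MvPolynomial (Fin (m + 1)) ℂ) ^ (d-1))),
      if_pos (Finset.mem_univ j)]
    rcases eq_or_ne j i with rfl | hne
    · rw [pderiv_C_mul, pderiv_pow, pderiv_X_self, if_pos rfl, mul_one]
    · rw [pderiv_C_mul, pderiv_pow, pderiv_X_of_ne (fun h => hne (Fin.succ_injective _ h.symm)),
        if_neg hne]
      ring
  rw [hA, hB, hC, mul_zero, add_zero]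
  rw [show d - 1 = (d-2)+1 from by omega, pow_succ]
  rw [show (d : MvPolynomial (Fin (m+1)) ℂ) = C ((d:ℂ)) from (map_natCast C d).symm]
  rw [map_mul, map_mul]
  push_cast
  simp only [map_ofNat]
  ring


/-- **Example 1.4: a homogeneous polynomial with a Morse line singularity.**
Let `n = m+1 ≥ 2`, `d > 2` and
`f = (a₁z₁² + ⋯ + a_m z_m²)·x^{d-2} + c₁z₁^d + ⋯ + c_m z_m^d`
(coordinates `(x, z₁, …, z_m)` on `ℂⁿ`), with all `aᵢ, cᵢ` nonzero and generic
(genericity encoded by the nonvanishing of a nonzero polynomial `P` at the coefficient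
vector). Then `Sing f` is exactly the line `L = {z₁ = ⋯ = z_m = 0}`, and along
`L \ {0}` the polynomial `f` has Morse (`A₁`) transversal singularity type: its
restriction to the transversal slice `{x = const}` has Milnor number `1`. -/
theorem homogeneous_line_singularity_morse_transversal (m d : ℕ) (hm : 1 ≤ m)
    (hd : 2 < d) :
    ∃ P : MvPolynomial (Fin m ⊕ Fin m) ℂ, P ≠ 0 ∧
      ∀ a c : Fin m → ℂ, (∀ i, a i ≠ 0) → (∀ i, c i ≠ 0) →
        eval (Sum.elim a c) P ≠ 0 →
        ∀ f : MvPolynomial (Fin (m + 1)) ℂ,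
          f = (∑ i : Fin m, C (a i) * (X (i.succ) : MvPolynomial (Fin (m + 1)) ℂ) ^ 2)
                * (X 0) ^ (d - 2)
              + ∑ i : Fin m, C (c i) * (X (i.succ)) ^ d →
        singSet f = {v : Fin (m + 1) → ℂ | ∀ i : Fin m, v i.succ = 0} ∧
        ∀ v : Fin (m + 1) → ℂ, (∀ i : Fin m, v i.succ = 0) → v ≠ 0 →
          milnor (MvPolynomial.aeval
            (Fin.cases (C (v 0)) (fun i => X i) : Fin (m + 1) → MvPolynomial (Fin m) ℂ)
            f) 0 = 1 := by
  classical
  haveI : NeZero (d - 2) := ⟨by omega⟩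
  refine ⟨∏ S ∈ Finset.univ.powerset.filter (fun S : Finset (Fin m) => S ≠ ∅), PS m d S,
    ?_, ?_⟩
  · rw [Finset.prod_ne_zero_iff]
    intro S hSmem
    exact PS_ne_zero m d hm hd S
      (Finset.nonempty_iff_ne_empty.mpr (Finset.mem_filter.mp hSmem).2)
  · intro a c ha hc hP f hf
    have hdcast : ((d-2:ℕ):ℂ) ≠ 0 := Nat.cast_ne_zero.mpr (by omega)
    have hdC : (d:ℂ) ≠ 0 := Nat.cast_ne_zero.mpr (by omega)
    constructor
    · ext v
      simp only [singSet, Set.mem_setOf_eq]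
      constructor
      · intro hv
        by_contra hnz
        push_neg at hnz
        obtain ⟨j1, hj1⟩ := hnz
        set S := Finset.univ.filter (fun j : Fin m => v j.succ ≠ 0) with hSdef
        have hSmem : ∀ j, j ∈ S ↔ v j.succ ≠ 0 := by
          intro j; simp [hSdef]
        have hSne : S ≠ ∅ := by
          intro hemp
          have hmem := (hSmem j1).mpr hj1
          rw [hemp] at hmem
          exact Finset.notMem_empty j1 hmem
        have hfac : ∀ j ∈ S, 2 * a j * (v 0)^(d-2) + (d:ℂ) * c j * (v j.succ)^(d-2) = 0 := by
          intro j hj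
          have h := hv j.succ
          rw [hf, pd_succ hd a c j] at h
          simp only [eval_mul, eval_add, eval_X, eval_C, eval_pow] at h
          rcases mul_eq_zero.mp h with h1 | h2
          · exact absurd h1 ((hSmem j).mp hj)
          · linear_combination h2
        have hx : v 0 ≠ 0 := by
          intro h00
          have h := hfac j1 ((hSmem j1).mpr hj1)
          rw [h00, zero_pow (by omega : d - 2 ≠ 0)] at h
          have hcd : (d:ℂ) * c j1 ≠ 0 := mul_ne_zero hdC (hc j1)
          have hzp : ((d:ℂ) * c j1) * (v j1.succ)^(d-2) = 0 := by linear_combination h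
          have := (mul_eq_zero.mp hzp).resolve_left hcd
          exact hj1 (pow_eq_zero_iff (by omega : d - 2 ≠ 0) |>.mp this)
        have hsum : ∑ j, a j * (v j.succ) ^ 2 = 0 := by
          have h := hv 0
          rw [hf, pd_zero hd a c] at h
          simp only [eval_mul, eval_pow, eval_X, eval_add, eval_C, map_sum, map_natCast] at h
          rcases mul_eq_zero.mp h with h1 | h2
          · simpa using h1
          · exfalso
            rcases mul_eq_zero.mp h2 with h3 | h4
            · exact hdcast h3
            · exact pow_ne_zero _ hx h4
        have hz := PS_eval_zero m d hd a c (v 0) hx (fun j => v j.succ) hc S hSmem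
          (by intro j hj; have := hfac j hj; push_cast; linear_combination this) hsum
        apply hP
        rw [map_prod]
        apply Finset.prod_eq_zero (i := S) _ hz
        rw [Finset.mem_filter]
        exact ⟨Finset.mem_powerset.mpr (Finset.subset_univ S), hSne⟩
      · intro hvz i
        rw [hf]
        induction i using Fin.cases with
        | zero =>
          rw [pd_zero hd a c]
          simp only [eval_mul, map_sum, eval_C, eval_pow, eval_X]
          have : ∑ i : Fin m, a i * v i.succ ^ 2 = 0 := by
            apply Finset.sum_eq_zero
            intro i _
            rw [hvz i]
            ring
          rw [this, zero_mul]
        | succ j =>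
          rw [pd_succ hd a c j]
          simp only [eval_mul, eval_X]
          rw [hvz j, zero_mul]
    · intro v hvz hvne
      have hv0 : v 0 ≠ 0 := by
        intro h00
        apply hvne
        funext i
        induction i using Fin.cases with
        | zero => exact h00
        | succ j => exact hvz j
      have hg : (MvPolynomial.aeval
          (Fin.cases (C (v 0)) (fun i => X i) : Fin (m + 1) → MvPolynomial (Fin m) ℂ) f) =
          (∑ i, C (a i) * X i ^ 2) * C (v 0) ^ (d-2) + ∑ i, C (c i) * X i ^ d := by
        rw [hf]
        simp only [map_add, map_mul, map_sum, map_pow, aeval_X, aeval_C]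
        simp [Fin.cases_zero, Fin.cases_succ, algebraMap_eq]
      rw [hg]
      exact milnor_eq_one hd a c ha hc (v 0) hv0

end
end
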